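/- arXiv:0911.3810 — 3 statements merged into one kernel-verified Lean document; each statement's English description precedes it below -/
import Mathlib

section
/- Let F be a forest with at least one edge and let r ≥ 2 be an integer, and let k*(F,r) be the smallest integer k for which Builder has a winning strategy in the deterministic F-avoidance game with r colors and tree size restriction k. Then there exists a sequence of online Painter strategies with r colors (one for each board size n) such that for every function N : ℕ → ℕ with N(n) = o(n^{1−1/k*(F,r)}), the probability that the board G_{N(n)} of the online F-avoidance game with r colors on n vertices contains a monochromatic copy of F tends to 0 as n → ∞. In particular, any winning strategy for Painter in the deterministic F-avoidance game with r colors and tree size restriction k*(F,r)−1, used online, has this property. -/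
open SimpleGraph Filter Asymptotics
open scoped Classical

/-- A history of the game: the sequence of edges presented so far, together with
the colors (elements of `Fin r`, representing the colors `1,…,r`) they received. -/
abbrev EdgeHistory (V : Type) (r : ℕ) := List (Sym2 V × Fin r)

/-- A Painter strategy on vertex type `V` with `r` colors: a function assigning a color
to every pair (history, new edge). -/
abbrev PainterStrategy (V : Type) (r : ℕ) := EdgeHistory V r → Sym2 V → Fin r

/-- Auxiliary function: run a Painter strategy on a list of presented edges,
extending the given history. -/
def runPainterAux {V : Type} {r : ℕ} (π : PainterStrategy V r) :
    EdgeHistory V r → List (Sym2 V) → EdgeHistory V r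
  | h, [] => h
  | h, e :: es => runPainterAux π (h ++ [(e, π h e)]) es

/-- The colored history obtained by coloring the edges of `l` successively
according to the Painter strategy `π`. -/
def runPainter {V : Type} {r : ℕ} (π : PainterStrategy V r) (l : List (Sym2 V)) :
    EdgeHistory V r :=
  runPainterAux π [] l

/-- `G` contains a copy of `F`, i.e. a subgraph isomorphic to `F`. -/
def IsCopy {α β : Type} (F : SimpleGraph α) (G : SimpleGraph β) : Prop :=
  ∃ f : α ↪ β, ∀ u v : α, F.Adj u v → G.Adj (f u) (f v)

/-- The graph formed by the edges of color `c` in the history `h`. -/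
def colorGraph {V : Type} {r : ℕ} (h : EdgeHistory V r) (c : Fin r) : SimpleGraph V :=
  SimpleGraph.fromEdgeSet {e | (e, c) ∈ h}

/-- The history `h` contains a monochromatic copy of `F`. -/
def HasMonoCopy {α V : Type} {r : ℕ} (F : SimpleGraph α) (h : EdgeHistory V r) : Prop :=
  ∃ c : Fin r, IsCopy F (colorGraph h c)

/-- The number of edges of `G` lying entirely within the vertex set `S`. -/
noncomputable def edgesWithin {V : Type} (G : SimpleGraph V) (S : Set V) : ℕ :=
  (G.edgeSet ∩ {e | ∀ v ∈ e, v ∈ S}).ncard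

/-- `m(G) ≤ d`: every subgraph `H` of `G` with at least one vertex satisfies `e_H ≤ d · v_H`. -/
def DensityLE {V : Type} (G : SimpleGraph V) (d : ℝ) : Prop :=
  ∀ S : Finset V, S.Nonempty → (edgesWithin G (↑S : Set V) : ℝ) ≤ d * (S.card : ℝ)

/-- `G` contains no cycle and every connected component of `G` has at most `k` edges
(equivalently, `G` is acyclic and contains no connected subgraph with more than `k` edges). -/
def TreeSizeLE {V : Type} (G : SimpleGraph V) (k : ℕ) : Prop :=
  G.IsAcyclic ∧ ∀ S : Set V, (G.induce S).Connected → edgesWithin G S ≤ k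

/-- A legal sequence of moves for Builder: distinct non-loop edges. -/
def ValidEdgeSeq {V : Type} (l : List (Sym2 V)) : Prop :=
  l.Nodup ∧ ∀ e ∈ l, ¬ e.IsDiag

/-- The (uncolored) board formed by a list of edges. -/
def boardOf {V : Type} (l : List (Sym2 V)) : SimpleGraph V :=
  SimpleGraph.fromEdgeSet {e | e ∈ l}

/-- Builder has a winning strategy in the deterministic `F`-avoidance game with `r` colors
and density restriction `d`. -/
def BuilderWinsDensity {α : Type} (F : SimpleGraph α) (r : ℕ) (d : ℝ) : Prop :=
  ∃ a : ℕ, ∀ π : PainterStrategy (Fin a) r, ∃ l : List (Sym2 (Fin a)),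
    ValidEdgeSeq l ∧ (∀ i : ℕ, DensityLE (boardOf (l.take i)) d) ∧
    HasMonoCopy F (runPainter π l)

/-- Builder has a winning strategy in the deterministic `F`-avoidance game with `r` colors
and tree size restriction `k`. -/
def BuilderWinsTree {α : Type} (F : SimpleGraph α) (r k : ℕ) : Prop :=
  ∃ a : ℕ, ∀ π : PainterStrategy (Fin a) r, ∃ l : List (Sym2 (Fin a)),
    ValidEdgeSeq l ∧ (∀ i : ℕ, TreeSizeLE (boardOf (l.take i)) k) ∧
    HasMonoCopy F (runPainter π l)

/-- The Painter strategy `π` on `a` vertices never creates a monochromatic copy of `F`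
against any Builder play obeying the tree size restriction `k`. -/
def PainterAvoidsTree {α : Type} (F : SimpleGraph α) (r k a : ℕ)
    (π : PainterStrategy (Fin a) r) : Prop :=
  ∀ l : List (Sym2 (Fin a)), ValidEdgeSeq l →
    (∀ i : ℕ, TreeSizeLE (boardOf (l.take i)) k) →
    ¬ HasMonoCopy F (runPainter π l)

/-- Painter has a winning strategy in the deterministic `F`-avoidance game with `r` colors
and tree size restriction `k`. -/
def PainterWinsTree {α : Type} (F : SimpleGraph α) (r k : ℕ) : Prop :=
  ∀ a : ℕ, ∃ π : PainterStrategy (Fin a) r, PainterAvoidsTree F r k a π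

/-- A sequence of `N` distinct non-loop edges on `n` vertices. -/
def ValidSeqFun {n N : ℕ} (f : Fin N → Sym2 (Fin n)) : Prop :=
  Function.Injective f ∧ ∀ i, ¬ (f i).IsDiag

/-- The probability (with respect to the uniformly random order in which the `N` distinct
edges of the random process on `n` vertices appear) of the event `P`. -/
noncomputable def onlineProb (n N : ℕ) (P : (Fin N → Sym2 (Fin n)) → Prop) : ℝ :=
  (Set.ncard {f : Fin N → Sym2 (Fin n) | ValidSeqFun f ∧ P f} : ℝ) /
  (Set.ncard {f : Fin N → Sym2 (Fin n) | ValidSeqFun f} : ℝ)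

/-- Event: playing the online strategy `π` on the random edge sequence `f` produces
a monochromatic copy of `F`. -/
def OnlineMonoCopy {α : Type} (F : SimpleGraph α) {r n N : ℕ}
    (π : PainterStrategy (Fin n) r) (f : Fin N → Sym2 (Fin n)) : Prop :=
  HasMonoCopy F (runPainter π (List.ofFn f))

/-!
A Painter strategy that wins the deterministic game with tree size restriction `k - 1`, used
online, can only produce a monochromatic copy of `F` after the random board has broken that
restriction. The board then contains `k` edges spanned by at most `k + 1` vertices (grow a
component with at least `k` edges greedily, or take `k` consecutive edges of a long cycle) or a
cycle of length `m ≤ k`. A first-moment count bounds the probability that `N` random edges contain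
`m` edges spanned by `s` vertices by `O(N ^ m * n ^ s / n ^ (2 * m))`, which tends to `0` for both
kinds of shapes when `N = o(n ^ (1 - 1 / k))`.
-/

namespace SimpleGraph

variable {V : Type} {G H : SimpleGraph V}

def HasSubgraphOfSize (G : SimpleGraph V) (m s : ℕ) : Prop :=
  ∃ E : Finset (Sym2 V), (E : Set (Sym2 V)) ⊆ G.edgeSet ∧ E.card = m ∧
    ∃ T : Finset V, T.card ≤ s ∧ ∀ e ∈ E, ∀ x ∈ e, x ∈ T

theorem HasSubgraphOfSize.mono {m s : ℕ} (hGH : G ≤ H) (h : G.HasSubgraphOfSize m s) :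
    H.HasSubgraphOfSize m s := by
  obtain ⟨E, hE, hcard, T, hT⟩ := h
  exact ⟨E, hE.trans (edgeSet_mono hGH), hcard, T, hT⟩

theorem Walk.IsTrail.hasSubgraphOfSize_take {u v : V} {p : G.Walk u v} (hp : p.IsTrail)
    {j : ℕ} (hj : j ≤ p.length) : G.HasSubgraphOfSize j (j + 1) := by
  classical
  have hnodup : (p.take j).edges.Nodup := by
    rw [Walk.edges_take]
    exact hp.edges_nodup.sublist (List.take_sublist _ _)
  refine ⟨(p.take j).edges.toFinset, fun e he => (p.take j).edges_subset_edgeSet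
      (List.mem_toFinset.mp he), ?_, (p.take j).support.toFinset, ?_,
    fun e he x hx => List.mem_toFinset.mpr
      (Walk.mem_support_of_mem_edges (List.mem_toFinset.mp he) hx)⟩
  · rw [List.toFinset_card_of_nodup hnodup, Walk.length_edges, Walk.take_length]
    omega
  · calc (p.take j).support.toFinset.card ≤ (p.take j).support.length :=
          List.toFinset_card_le _
      _ ≤ j + 1 := by rw [Walk.length_support, Walk.take_length]; omega

/-- The base point of a cycle is repeated at its end, so the cycle's support has as many
distinct vertices as the cycle has edges. -/
theorem Walk.IsCycle.hasSubgraphOfSize {u : V} {c : G.Walk u u} (hc : c.IsCycle) :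
    G.HasSubgraphOfSize c.length c.length := by
  classical
  refine ⟨c.edges.toFinset, fun e he => c.edges_subset_edgeSet (List.mem_toFinset.mp he),
    by rw [List.toFinset_card_of_nodup hc.edges_nodup, Walk.length_edges],
    c.support.tail.toFinset, ?_, fun e he x hx => ?_⟩
  · calc c.support.tail.toFinset.card ≤ c.support.tail.length := List.toFinset_card_le _
      _ = c.length := by rw [List.length_tail, Walk.length_support]; omega
  · have hxc := Walk.mem_support_of_mem_edges (List.mem_toFinset.mp he) hx
    rw [← Walk.cons_tail_support, List.mem_cons] at hxc
    rcases hxc with rfl | hxc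
    · exact List.mem_toFinset.mpr (Walk.end_mem_tail_support hc.not_nil)
    · exact List.mem_toFinset.mpr hxc

theorem exists_edge_notMem_touching {S : Set V} (hS : (G.induce S).Connected)
    {E : Finset (Sym2 V)} {T : Finset V} (hTS : ↑T ⊆ S) (hT : T.Nonempty)
    (hET : ∀ e ∈ E, ∀ x ∈ e, x ∈ T) (hE : E.card < edgesWithin G S) :
    ∃ e ∈ G.edgeSet ∩ {e | ∀ v ∈ e, v ∈ S}, e ∉ E ∧ ∃ t ∈ T, t ∈ e := by
  obtain ⟨e', he'W, he'E⟩ := Set.exists_mem_notMem_of_ncard_lt_ncard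
    (s := (E : Set (Sym2 V))) (t := G.edgeSet ∩ {e | ∀ v ∈ e, v ∈ S})
    (by rwa [Set.ncard_coe_finset])
  by_cases hxT : e'.out.1 ∈ T
  · exact ⟨e', he'W, he'E, _, hxT, e'.out_fst_mem⟩
  obtain ⟨u, huT⟩ := hT
  obtain ⟨w⟩ := hS.preconnected ⟨u, hTS huT⟩ ⟨_, he'W.2 _ e'.out_fst_mem⟩
  obtain ⟨d, -, hd₁, hd₂⟩ := w.exists_boundary_dart {y | (y : V) ∈ T} huT hxT
  refine ⟨s(d.fst, d.snd), ⟨d.adj, ?_⟩, fun hd => hd₂ (hET _ hd _ (Sym2.mem_mk_right _ _)),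
    d.fst, hd₁, Sym2.mem_mk_left _ _⟩
  intro v hv
  rcases Sym2.mem_iff.mp hv with rfl | rfl
  exacts [d.fst.2, d.snd.2]

theorem hasSubgraphOfSize_of_connected_induce {S : Set V} (hS : (G.induce S).Connected)
    {j : ℕ} (hj : j ≤ edgesWithin G S) : G.HasSubgraphOfSize j (j + 1) := by
  suffices ∀ j ≤ edgesWithin G S, ∃ E : Finset (Sym2 V),
      ↑E ⊆ G.edgeSet ∩ {e | ∀ v ∈ e, v ∈ S} ∧ E.card = j ∧ ∃ T : Finset V,
        ↑T ⊆ S ∧ T.Nonempty ∧ T.card ≤ j + 1 ∧ ∀ e ∈ E, ∀ x ∈ e, x ∈ T by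
    obtain ⟨E, hE, hcard, T, -, -, hT⟩ := this j hj
    exact ⟨E, hE.trans Set.inter_subset_left, hcard, T, hT⟩
  intro j hj
  induction j with
  | zero =>
    obtain ⟨v⟩ := hS.nonempty
    exact ⟨∅, by simp, rfl, {v.1}, by simp, Finset.singleton_nonempty _, by simp,
      by simp⟩
  | succ j ih =>
    obtain ⟨E, hEW, rfl, T, hTS, hT, hTcard, hET⟩ := ih (by omega)
    obtain ⟨e, heW, heE, t, htT, hte⟩ := exists_edge_notMem_touching hS hTS hT hET (by omega)
    obtain ⟨q, rfl⟩ := Sym2.mem_iff_exists.mp hte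
    refine ⟨insert s(t, q) E, ?_, Finset.card_insert_of_notMem heE, insert q T, ?_,
      Finset.insert_nonempty _ _, (Finset.card_insert_le _ _).trans (by omega), ?_⟩
    · rw [Finset.coe_insert]
      exact Set.insert_subset heW hEW
    · rw [Finset.coe_insert]
      exact Set.insert_subset (heW.2 q (Sym2.mem_mk_right _ _)) hTS
    · intro e he x hx
      rcases Finset.mem_insert.mp he with rfl | he
      · rcases Sym2.mem_iff.mp hx with rfl | rfl
        · exact Finset.mem_insert_of_mem htT
        · exact Finset.mem_insert_self _ _
      · exact Finset.mem_insert_of_mem (hET e he x hx)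

end SimpleGraph

/-- The shapes `(edges, vertices)` of the subgraphs forced by breaking the tree size
restriction `k - 1`: `k` edges on at most `k + 1` vertices, or a cycle of length at most `k`. -/
def denseShapes (k : ℕ) : Finset (ℕ × ℕ) :=
  insert (k, k + 1) ((Finset.Icc 1 k).image fun m => (m, m))

theorem pos_of_mem_denseShapes {k : ℕ} (hk : 1 ≤ k) {p : ℕ × ℕ} (hp : p ∈ denseShapes k) :
    0 < p.1 := by
  simp only [denseShapes, Finset.mem_insert, Finset.mem_image, Finset.mem_Icc] at hp
  rcases hp with rfl | ⟨m, ⟨hm, -⟩, rfl⟩ <;> omega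

theorem exists_mem_denseShapes_of_not_treeSizeLE {V : Type} {G : SimpleGraph V}
    {k : ℕ} (hk : 1 ≤ k) (h : ¬ TreeSizeLE G (k - 1)) :
    ∃ p ∈ denseShapes k, G.HasSubgraphOfSize p.1 p.2 := by
  rw [TreeSizeLE, not_and_or] at h
  rcases h with hcyc | hS
  · obtain ⟨v, c, hc⟩ : ∃ v, ∃ c : G.Walk v v, c.IsCycle := by simpa [IsAcyclic] using hcyc
    by_cases hck : c.length ≤ k
    · refine ⟨(c.length, c.length), ?_, hc.hasSubgraphOfSize⟩
      have := hc.three_le_length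
      simp only [denseShapes, Finset.mem_insert, Finset.mem_image, Finset.mem_Icc]
      exact Or.inr ⟨c.length, ⟨by omega, hck⟩, rfl⟩
    · exact ⟨(k, k + 1), Finset.mem_insert_self _ _,
        hc.isCircuit.isTrail.hasSubgraphOfSize_take (by omega)⟩
  · obtain ⟨S, hS, hlt⟩ : ∃ S, (G.induce S).Connected ∧ k - 1 < edgesWithin G S := by
      simpa using hS
    exact ⟨(k, k + 1), Finset.mem_insert_self _ _,
      hasSubgraphOfSize_of_connected_induce hS (by omega)⟩

theorem TreeSizeLE.not_adj {V : Type} [Finite V] {G : SimpleGraph V}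
    (h : TreeSizeLE G 0) {x y : V} : ¬ G.Adj x y := fun hxy => by
  have hpos : 0 < edgesWithin G {x, y} :=
    (Set.ncard_pos (Set.toFinite _)).mpr ⟨s(x, y), hxy, fun v hv => by
      rcases Sym2.mem_iff.mp hv with rfl | rfl <;> simp⟩
  have := h.2 _ (induce_pair_connected_of_adj hxy)
  omega

theorem mem_or_mem_of_mem_runPainterAux {V : Type} {r : ℕ} (π : PainterStrategy V r)
    {l : List (Sym2 V)} {h : EdgeHistory V r} {e : Sym2 V} {c : Fin r}
    (he : (e, c) ∈ runPainterAux π h l) : (e, c) ∈ h ∨ e ∈ l := by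
  induction l generalizing h with
  | nil => exact Or.inl he
  | cons a l ih =>
    rcases ih he with he | he
    · rcases List.mem_append.mp he with he | he
      · exact Or.inl he
      · simp only [List.mem_singleton, Prod.mk.injEq] at he
        exact Or.inr (he.1 ▸ List.mem_cons_self)
    · exact Or.inr (List.mem_cons_of_mem _ he)

theorem not_builderWinsTree_zero {α : Type} {F : SimpleGraph α} (hF : F.edgeSet.Nonempty)
    {r : ℕ} (hr : 0 < r) : ¬ BuilderWinsTree F r 0 := by
  rintro ⟨a, hwin⟩
  obtain ⟨l, -, htree, c, f, hcopy⟩ := hwin fun _ _ => ⟨0, hr⟩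
  obtain ⟨⟨u, v⟩, huv⟩ := hF
  obtain ⟨hmem, hne⟩ := (fromEdgeSet_adj _).mp (hcopy u v huv)
  have hl : s(f u, f v) ∈ l := (mem_or_mem_of_mem_runPainterAux _ hmem).resolve_left List.not_mem_nil
  have htree' := htree l.length
  rw [List.take_length] at htree'
  exact htree'.not_adj ((fromEdgeSet_adj _).mpr ⟨hl, hne⟩)

theorem painterWinsTree_of_not_builderWinsTree {α : Type} {F : SimpleGraph α} {r k : ℕ}
    (h : ¬ BuilderWinsTree F r k) : PainterWinsTree F r k := by
  simpa [BuilderWinsTree, PainterWinsTree, PainterAvoidsTree] using h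

theorem boardOf_take_le {V : Type} (l : List (Sym2 V)) (i : ℕ) :
    boardOf (l.take i) ≤ boardOf l :=
  fromEdgeSet_mono fun _ he => List.mem_of_mem_take he

theorem ValidSeqFun.validEdgeSeq_ofFn {n N : ℕ} {f : Fin N → Sym2 (Fin n)}
    (hf : ValidSeqFun f) : ValidEdgeSeq (List.ofFn f) :=
  ⟨List.nodup_ofFn.mpr hf.1, by simpa [List.mem_ofFn] using hf.2⟩

theorem PainterAvoidsTree.exists_mem_denseShapes {α : Type} {F : SimpleGraph α} {r k n N : ℕ}
    (hk : 1 ≤ k) {π : PainterStrategy (Fin n) r} (hπ : PainterAvoidsTree F r (k - 1) n π)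
    {f : Fin N → Sym2 (Fin n)} (hf : ValidSeqFun f) (hmono : OnlineMonoCopy F π f) :
    ∃ p ∈ denseShapes k, (boardOf (List.ofFn f)).HasSubgraphOfSize p.1 p.2 := by
  obtain ⟨i, hi⟩ : ∃ i, ¬ TreeSizeLE (boardOf ((List.ofFn f).take i)) (k - 1) := by
    by_contra! h
    exact hπ _ hf.validEdgeSeq_ofFn h hmono
  obtain ⟨p, hp, hsub⟩ := exists_mem_denseShapes_of_not_treeSizeLE hk hi
  exact ⟨p, hp, hsub.mono (boardOf_take_le _ _)⟩

theorem Sym2.exists_eq_mk_of_forall_mem_range {ι α : Type*} {c : ι → α} {e : Sym2 α}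
    (h : ∀ x ∈ e, x ∈ Set.range c) : ∃ q : ι × ι, e = s(c q.1, c q.2) := by
  induction e using Sym2.ind with
  | _ x y =>
    obtain ⟨i, rfl⟩ := h x (Sym2.mem_mk_left _ _)
    obtain ⟨j, rfl⟩ := h y (Sym2.mem_mk_right _ _)
    exact ⟨(i, j), rfl⟩

theorem Finset.exists_subset_range_fin {β : Type*} {T : Finset β} (hT : T.Nonempty) {s : ℕ}
    (hs : T.card ≤ s) : ∃ c : Fin s → β, ↑T ⊆ Set.range c := by
  obtain ⟨e⟩ : Nonempty (T ↪ Fin s) :=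
    Function.Embedding.nonempty_of_card_le (by simpa using hs)
  have : Nonempty T := hT.to_subtype
  refine ⟨fun i => (Function.invFun e i : T), fun x hx => ⟨e ⟨x, hx⟩, ?_⟩⟩
  simp [Function.leftInverse_invFun e.injective _]

theorem exists_embedding_of_hasSubgraphOfSize {n N m s : ℕ} (hm : 0 < m)
    {f : Fin N → Sym2 (Fin n)} (h : (boardOf (List.ofFn f)).HasSubgraphOfSize m s) :
    ∃ g : Fin m ↪ Fin N, ∃ c : Fin s → Fin n, ∃ p : Fin m → Fin s × Fin s,
      ∀ j, f (g j) = s(c (p j).1, c (p j).2) := by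
  obtain ⟨E, hEG, hcard, T, hTs, hET⟩ := h
  have hidx : ∀ e : E, ∃ i, f i = e := fun e => by
    have he := hEG e.2
    rw [boardOf, edgeSet_fromEdgeSet] at he
    simpa [List.mem_ofFn] using he.1
  choose idx hidx using hidx
  have hT : T.Nonempty := by
    obtain ⟨e, he⟩ := Finset.card_pos.mp (hcard ▸ hm)
    exact ⟨_, hET e he _ e.out_fst_mem⟩
  obtain ⟨c, hc⟩ := Finset.exists_subset_range_fin hT hTs
  let ε : Fin m ≃ E := (Fintype.equivFinOfCardEq (by simpa using hcard)).symm
  choose p hp using fun j =>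
    Sym2.exists_eq_mk_of_forall_mem_range fun x hx => hc (hET _ (ε j).2 x hx)
  refine ⟨⟨fun j => idx (ε j), fun j₁ j₂ h => ε.injective (Subtype.ext ?_)⟩, c, p,
    fun j => (hidx _).trans (hp j)⟩
  rw [← hidx, ← hidx]
  exact congrArg f h

def validSeqEquivEmbedding (n N : ℕ) :
    {f : Fin N → Sym2 (Fin n) // ValidSeqFun f} ≃
      (Fin N ↪ {e : Sym2 (Fin n) // ¬ e.IsDiag}) where
  toFun f := ⟨fun i => ⟨f.1 i, f.2.2 i⟩, fun _ _ h => f.2.1 (congrArg Subtype.val h)⟩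
  invFun g := ⟨fun i => (g i).1, fun _ _ h => g.injective (Subtype.ext h), fun i => (g i).2⟩
  left_inv _ := rfl
  right_inv _ := rfl

theorem ncard_validSeqFun (n N : ℕ) :
    {f : Fin N → Sym2 (Fin n) | ValidSeqFun f}.ncard = (n.choose 2).descFactorial N := by
  rw [← Nat.card_coe_set_eq, Set.coe_ofPred, Nat.card_congr (validSeqEquivEmbedding n N),
    Nat.card_eq_fintype_card, Fintype.card_embedding_eq, Sym2.card_subtype_not_diag]
  simp

theorem ncard_validSeqFun_comp_eq_le {n N m : ℕ} (g : Fin m ↪ Fin N)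
    (E : Fin m → Sym2 (Fin n)) :
    {f : Fin N → Sym2 (Fin n) | ValidSeqFun f ∧ ∀ j, f (g j) = E j}.ncard ≤
      (n.choose 2).descFactorial (N - m) := by
  let restrict : {f : Fin N → Sym2 (Fin n) | ValidSeqFun f ∧ ∀ j, f (g j) = E j} →
      ({i // i ∉ Set.range g} ↪ {e : Sym2 (Fin n) // ¬ e.IsDiag}) := fun f =>
    ⟨fun i => ⟨f.1 i, f.2.1.2 i⟩,
      fun _ _ h => Subtype.ext (f.2.1.1 (congrArg Subtype.val h))⟩
  have hinj : Function.Injective restrict := by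
    intro f₁ f₂ h
    ext i : 2
    by_cases hi : i ∈ Set.range g
    · obtain ⟨j, rfl⟩ := hi
      rw [f₁.2.2 j, f₂.2.2 j]
    · exact congrArg Subtype.val (DFunLike.congr_fun h ⟨i, hi⟩)
  calc _ = Nat.card _ := (Nat.card_coe_set_eq _).symm
    _ ≤ Nat.card ({i // i ∉ Set.range g} ↪ {e : Sym2 (Fin n) // ¬ e.IsDiag}) :=
        Nat.card_le_card_of_injective _ hinj
    _ = _ := by
        rw [Nat.card_eq_fintype_card, Fintype.card_embedding_eq, Sym2.card_subtype_not_diag,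
          Fintype.card_subtype_compl, Set.card_range_of_injective g.injective]
        simp

theorem ncard_validSeqFun_hasSubgraphOfSize_le {n N m s : ℕ} (hm : 0 < m) :
    {f : Fin N → Sym2 (Fin n) |
        ValidSeqFun f ∧ (boardOf (List.ofFn f)).HasSubgraphOfSize m s}.ncard ≤
      N.descFactorial m * n ^ s * (s * s) ^ m * (n.choose 2).descFactorial (N - m) := by
  let fiber : (Fin m ↪ Fin N) × (Fin s → Fin n) × (Fin m → Fin s × Fin s) →
      Set (Fin N → Sym2 (Fin n)) := fun d =>
    {f | ValidSeqFun f ∧ ∀ j, f (d.1 j) = s(d.2.1 (d.2.2 j).1, d.2.1 (d.2.2 j).2)}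
  calc _ ≤ (⋃ d, fiber d).ncard := by
        refine Set.ncard_le_ncard ?_ (Set.toFinite _)
        rintro f ⟨hf, hsub⟩
        obtain ⟨g, c, p, h⟩ := exists_embedding_of_hasSubgraphOfSize hm hsub
        exact Set.mem_iUnion.mpr ⟨(g, c, p), hf, h⟩
    _ ≤ ∑ d, (fiber d).ncard := Set.ncard_iUnion_le_of_fintype _
    _ ≤ ∑ _d : (Fin m ↪ Fin N) × (Fin s → Fin n) × (Fin m → Fin s × Fin s),
          (n.choose 2).descFactorial (N - m) :=
        Finset.sum_le_sum fun d _ => ncard_validSeqFun_comp_eq_le d.1 _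
    _ = _ := by
        rw [Finset.sum_const, Finset.card_univ, smul_eq_mul]
        simp only [Fintype.card_prod, Fintype.card_embedding_eq, Fintype.card_fun,
          Fintype.card_fin]
        ring

theorem Nat.descFactorial_mul_descFactorial_sub_mul_pow_le (M N m : ℕ) :
    N.descFactorial m * M.descFactorial (N - m) * (M - N) ^ m ≤ N ^ m * M.descFactorial N := by
  rcases le_or_gt m N with hmN | hNm
  · have hsplit := Nat.descFactorial_mul_descFactorial (n := M) (Nat.sub_le N m)
    rw [Nat.sub_sub_self hmN] at hsplit
    have hpow : (M - N) ^ m ≤ (M - (N - m)).descFactorial m :=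
      (Nat.pow_le_pow_left (by omega) m).trans (Nat.pow_sub_le_descFactorial _ m)
    calc _ = N.descFactorial m * (M.descFactorial (N - m) * (M - N) ^ m) := by ring
      _ ≤ N ^ m * (M.descFactorial (N - m) * (M - (N - m)).descFactorial m) := by
          gcongr
          exact Nat.descFactorial_le_pow _ _
      _ = _ := by rw [← hsplit]; ring
  · simp [Nat.descFactorial_eq_zero_iff_lt.mpr hNm]

theorem onlineProb_hasSubgraphOfSize_le {n N m s : ℕ} (hm : 0 < m) (hN : N < n.choose 2) :
    onlineProb n N (fun f => (boardOf (List.ofFn f)).HasSubgraphOfSize m s) ≤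
      ((s : ℝ) * s) ^ m * ((N : ℝ) ^ m * (n : ℝ) ^ s) /
        ((n.choose 2 - N : ℕ) : ℝ) ^ m := by
  have hvalid : 0 < (n.choose 2).descFactorial N :=
    Nat.pos_of_ne_zero (by rw [Ne, Nat.descFactorial_eq_zero_iff_lt]; omega)
  have hgap : 0 < n.choose 2 - N := Nat.sub_pos_of_lt hN
  have hcount : {f : Fin N → Sym2 (Fin n) |
        ValidSeqFun f ∧ (boardOf (List.ofFn f)).HasSubgraphOfSize m s}.ncard *
          (n.choose 2 - N) ^ m ≤ n ^ s * (s * s) ^ m * (N ^ m * (n.choose 2).descFactorial N) :=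
    calc _ ≤ N.descFactorial m * n ^ s * (s * s) ^ m * (n.choose 2).descFactorial (N - m) *
          (n.choose 2 - N) ^ m := Nat.mul_le_mul_right _ (ncard_validSeqFun_hasSubgraphOfSize_le hm)
      _ = n ^ s * (s * s) ^ m * (N.descFactorial m * (n.choose 2).descFactorial (N - m) *
          (n.choose 2 - N) ^ m) := by ring
      _ ≤ _ := Nat.mul_le_mul_left _
          (Nat.descFactorial_mul_descFactorial_sub_mul_pow_le (n.choose 2) N m)
  rw [onlineProb, ncard_validSeqFun, div_le_div_iff₀ (by exact_mod_cast hvalid) (by positivity)]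
  calc _ ≤ ((n ^ s * (s * s) ^ m * (N ^ m * (n.choose 2).descFactorial N) : ℕ) : ℝ) := by
        exact_mod_cast hcount
    _ = _ := by push_cast; ring

theorem onlineProb_nonneg (n N : ℕ) (P : (Fin N → Sym2 (Fin n)) → Prop) :
    0 ≤ onlineProb n N P := by
  unfold onlineProb
  positivity

theorem onlineProb_le_sum {ι : Type*} {n N : ℕ} {P : (Fin N → Sym2 (Fin n)) → Prop}
    (S : Finset ι) (Q : ι → (Fin N → Sym2 (Fin n)) → Prop)
    (h : ∀ f, ValidSeqFun f → P f → ∃ i ∈ S, Q i f) :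
    onlineProb n N P ≤ ∑ i ∈ S, onlineProb n N (Q i) := by
  have hcount : {f | ValidSeqFun f ∧ P f}.ncard ≤
      ∑ i ∈ S, {f | ValidSeqFun f ∧ Q i f}.ncard := by
    refine (Set.ncard_le_ncard ?_ (Set.toFinite _)).trans (S.set_ncard_biUnion_le _)
    rintro f ⟨hf, hP⟩
    obtain ⟨i, hi, hQ⟩ := h f hf hP
    exact Set.mem_biUnion hi ⟨hf, hQ⟩
  simp only [onlineProb, ← Finset.sum_div]
  gcongr
  exact_mod_cast hcount

section Asymptotics

variable {N : ℕ → ℕ}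

theorem isLittleO_natCast_of_isLittleO_rpow {a : ℝ} (ha : a ≤ 1)
    (hN : (fun n : ℕ => (N n : ℝ)) =o[atTop] fun n : ℕ => (n : ℝ) ^ a) :
    (fun n : ℕ => (N n : ℝ)) =o[atTop] fun n : ℕ => (n : ℝ) := by
  refine hN.trans_isBigO (IsBigO.of_bound 1 ?_)
  filter_upwards [eventually_ge_atTop 1] with n hn
  have hn' : (1 : ℝ) ≤ n := by exact_mod_cast hn
  rw [Real.norm_of_nonneg (by positivity), Real.norm_of_nonneg (by positivity), one_mul]
  simpa using Real.rpow_le_rpow_of_exponent_le hn' ha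

theorem eventually_lt_choose_two_and_sq_le
    (hN : (fun n : ℕ => (N n : ℝ)) =o[atTop] fun n : ℕ => (n : ℝ)) :
    ∀ᶠ n in atTop,
      N n < n.choose 2 ∧ (n : ℝ) ^ 2 ≤ 4 * ((n.choose 2 - N n : ℕ) : ℝ) := by
  filter_upwards [hN.bound one_pos, eventually_ge_atTop 6] with n hNn hn
  have hn6 : (6 : ℝ) ≤ n := by exact_mod_cast hn
  rw [Real.norm_of_nonneg (by positivity), Real.norm_of_nonneg (by positivity), one_mul] at hNn
  have hchoose : ((n.choose 2 : ℕ) : ℝ) = n * (n - 1) / 2 := Nat.cast_choose_two ℝ n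
  have hlt : N n < n.choose 2 := by
    have : (N n : ℝ) < n.choose 2 := by rw [hchoose]; nlinarith
    exact_mod_cast this
  refine ⟨hlt, ?_⟩
  rw [Nat.cast_sub hlt.le, hchoose]
  nlinarith

theorem tendsto_div_pow_choose_two_sub {m : ℕ} {u : ℕ → ℝ}
    (hgap : ∀ᶠ n : ℕ in atTop, (n : ℝ) ^ 2 ≤ 4 * ((n.choose 2 - N n : ℕ) : ℝ))
    (hu : u =o[atTop] fun n : ℕ => (n : ℝ) ^ (2 * m)) :
    Tendsto (fun n : ℕ => u n / ((n.choose 2 - N n : ℕ) : ℝ) ^ m) atTop (nhds 0) := by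
  have hsq : (fun n : ℕ => (n : ℝ) ^ 2) =O[atTop]
      fun n => ((n.choose 2 - N n : ℕ) : ℝ) := by
    refine IsBigO.of_bound 4 ?_
    filter_upwards [hgap] with n hn
    rwa [Real.norm_of_nonneg (by positivity), Real.norm_of_nonneg (by positivity)]
  refine (hu.trans_isBigO ?_).tendsto_div_nhds_zero
  simpa only [← pow_mul] using hsq.pow m

/-- For the shape `(k, k + 1)` the threshold exponent is exact:
`N ^ k * n ^ (k + 1) = (N / n ^ (1 - 1 / k)) ^ k * n ^ (2 * k)`. -/
theorem isLittleO_of_mem_denseShapes {k : ℕ} (hk : 1 ≤ k)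
    (hN : (fun n : ℕ => (N n : ℝ)) =o[atTop]
      fun n : ℕ => (n : ℝ) ^ ((1 : ℝ) - 1 / (k : ℝ)))
    {p : ℕ × ℕ} (hp : p ∈ denseShapes k) :
    (fun n : ℕ => (N n : ℝ) ^ p.1 * (n : ℝ) ^ p.2) =o[atTop]
      fun n : ℕ => (n : ℝ) ^ (2 * p.1) := by
  simp only [denseShapes, Finset.mem_insert, Finset.mem_image, Finset.mem_Icc] at hp
  rcases hp with rfl | ⟨m, ⟨hm, -⟩, rfl⟩
  · have hexp : ((1 : ℝ) - 1 / k) * k + (k + 1 : ℕ) = (2 * k : ℕ) := by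
      have : (k : ℝ) ≠ 0 := by positivity
      push_cast
      field_simp
      ring
    refine ((hN.pow hk).mul_isBigO
      (isBigO_refl (fun n : ℕ => (n : ℝ) ^ (k + 1)) atTop)).congr_right fun n => ?_
    rw [← Real.rpow_natCast ((n : ℝ) ^ _) k, ← Real.rpow_mul n.cast_nonneg,
      ← Real.rpow_natCast (n : ℝ) (k + 1),
      ← Real.rpow_add' n.cast_nonneg (by rw [hexp]; positivity), hexp, Real.rpow_natCast]
  · have hexp : (1 : ℝ) - 1 / k ≤ 1 := by
      have : (0 : ℝ) ≤ 1 / k := by positivity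
      linarith
    exact (((isLittleO_natCast_of_isLittleO_rpow hexp hN).pow hm).mul_isBigO
      (isBigO_refl _ _)).congr_right fun n => by ring

end Asymptotics

theorem tendsto_onlineProb_of_painterAvoidsTree {α : Type} (F : SimpleGraph α) {r k : ℕ}
    (hk : 1 ≤ k) (π : (n : ℕ) → PainterStrategy (Fin n) r)
    (hπ : ∀ n, PainterAvoidsTree F r (k - 1) n (π n)) (N : ℕ → ℕ)
    (hN : (fun n : ℕ => (N n : ℝ)) =o[atTop]
      fun n : ℕ => (n : ℝ) ^ ((1 : ℝ) - 1 / (k : ℝ))) :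
    Tendsto (fun n => onlineProb n (N n) (OnlineMonoCopy F (π n))) atTop (nhds 0) := by
  have hgap := eventually_lt_choose_two_and_sq_le
    (isLittleO_natCast_of_isLittleO_rpow (by simp) hN)
  have hbound : ∀ᶠ n in atTop, onlineProb n (N n) (OnlineMonoCopy F (π n)) ≤
      ∑ p ∈ denseShapes k, ((p.2 : ℝ) * p.2) ^ p.1 * ((N n : ℝ) ^ p.1 * (n : ℝ) ^ p.2) /
        ((n.choose 2 - N n : ℕ) : ℝ) ^ p.1 := by
    filter_upwards [hgap] with n hn
    exact (onlineProb_le_sum _ _ fun f hf hmono => (hπ n).exists_mem_denseShapes hk hf hmono).trans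
      (Finset.sum_le_sum fun p hp =>
        onlineProb_hasSubgraphOfSize_le (pos_of_mem_denseShapes hk hp) hn.1)
  have hlim := tendsto_finsetSum (denseShapes k) fun p hp =>
    tendsto_div_pow_choose_two_sub (hgap.mono fun _ h => h.2)
      ((isLittleO_of_mem_denseShapes hk hN hp).const_mul_left (((p.2 : ℝ) * p.2) ^ p.1))
  simp only [Finset.sum_const_zero] at hlim
  exact squeeze_zero' (Eventually.of_forall fun n => onlineProb_nonneg _ _ _) hbound hlim

theorem statement2_general {α : Type} (F : SimpleGraph α)
    (hF : F.edgeSet.Nonempty) (r : ℕ) (hr : 2 ≤ r)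
    (k : ℕ) (hk : BuilderWinsTree F r k) (hkmin : ∀ j : ℕ, j < k → ¬ BuilderWinsTree F r j) :
    (∃ π : (n : ℕ) → PainterStrategy (Fin n) r,
      ∀ N : ℕ → ℕ,
        (fun n : ℕ => (N n : ℝ)) =o[atTop] (fun n : ℕ => (n : ℝ) ^ ((1 : ℝ) - 1 / (k : ℝ))) →
        Tendsto (fun n : ℕ => onlineProb n (N n) (OnlineMonoCopy F (π n)))
          atTop (nhds 0)) ∧
    (∀ π : (n : ℕ) → PainterStrategy (Fin n) r,
      (∀ n : ℕ, PainterAvoidsTree F r (k - 1) n (π n)) →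
      ∀ N : ℕ → ℕ,
        (fun n : ℕ => (N n : ℝ)) =o[atTop] (fun n : ℕ => (n : ℝ) ^ ((1 : ℝ) - 1 / (k : ℝ))) →
        Tendsto (fun n : ℕ => onlineProb n (N n) (OnlineMonoCopy F (π n)))
          atTop (nhds 0)) := by
  have hk1 : 1 ≤ k := Nat.one_le_iff_ne_zero.mpr fun hk0 =>
    not_builderWinsTree_zero hF (by omega) (hk0 ▸ hk)
  choose π hπ using painterWinsTree_of_not_builderWinsTree (hkmin (k - 1) (by omega))
  exact ⟨⟨π, tendsto_onlineProb_of_painterAvoidsTree F hk1 π hπ⟩,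
    tendsto_onlineProb_of_painterAvoidsTree F hk1⟩

/-- lower bound part of Theorem 6. Let `F` be a forest with at least one
edge, `r ≥ 2`, and let `k` be the smallest integer for which Builder wins the deterministic
`F`-avoidance game with `r` colors and tree size restriction `k`. Then there is a sequence of
online Painter strategies that a.a.s. avoids a monochromatic copy of `F` for `N(n) = o(n^(1-1/k))`
steps; in particular, any winning strategy for Painter in the deterministic game with tree size
restriction `k-1`, used online, has this property. -/
theorem statement2 {α : Type} [Fintype α] (F : SimpleGraph α) (hforest : F.IsAcyclic)
    (hF : F.edgeSet.Nonempty) (r : ℕ) (hr : 2 ≤ r)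
    (k : ℕ) (hk : BuilderWinsTree F r k) (hkmin : ∀ j : ℕ, j < k → ¬ BuilderWinsTree F r j) :
    (∃ π : (n : ℕ) → PainterStrategy (Fin n) r,
      ∀ N : ℕ → ℕ,
        (fun n : ℕ => (N n : ℝ)) =o[atTop] (fun n : ℕ => (n : ℝ) ^ ((1 : ℝ) - 1 / (k : ℝ))) →
        Tendsto (fun n : ℕ => onlineProb n (N n) (OnlineMonoCopy F (π n)))
          atTop (nhds 0)) ∧
    (∀ π : (n : ℕ) → PainterStrategy (Fin n) r,
      (∀ n : ℕ, PainterAvoidsTree F r (k - 1) n (π n)) →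
      ∀ N : ℕ → ℕ,
        (fun n : ℕ => (N n : ℝ)) =o[atTop] (fun n : ℕ => (n : ℝ) ^ ((1 : ℝ) - 1 / (k : ℝ))) →
        Tendsto (fun n : ℕ => onlineProb n (N n) (OnlineMonoCopy F (π n)))
          atTop (nhds 0)) :=
  statement2_general F hF r hr k hk hkmin
end

section
/- Let S_ℓ denote the star with ℓ edges, and let ℓ ≥ 1 and r ≥ 2 be integers. Then k*(S_ℓ,r) = r(ℓ−1)+1; that is, Builder has a winning strategy in the deterministic S_ℓ-avoidance game with r colors and tree size restriction r(ℓ−1)+1, and Painter has a winning strategy in the deterministic S_ℓ-avoidance game with r colors and tree size restriction r(ℓ−1). -/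
open SimpleGraph Filter Asymptotics
open scoped Classical

/-!
Builder presents a star with `r (ℓ - 1) + 1` edges, which is a legal board; by pigeonhole `ℓ` of
its edges get the same color.

Painter colors each new edge `xy` with a color in which both `x` and `y` have fewer than `ℓ - 1`
edges so far, so no vertex ever gets `ℓ` edges of one color. Such a color exists: otherwise every
color has at least `ℓ - 1` edges at `x` or at `y`, and these `r (ℓ - 1)` edges together with `xy`
all lie in the component of `xy`, which is then too large.
-/

lemma List.countP_or_eq_add {α : Type} {p q : α → Prop} [DecidablePred p] [DecidablePred q]
    {l : List α} (h : ∀ a ∈ l, ¬ (p a ∧ q a)) :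
    l.countP (fun a ↦ p a ∨ q a) = l.countP (p ·) + l.countP (q ·) := by
  induction l with
  | nil => rfl
  | cons a l ih =>
    simp only [List.mem_cons, forall_eq_or_imp] at h
    simp only [List.countP_cons, ih h.2, decide_eq_true_eq]
    by_cases hp : p a <;> by_cases hq : q a <;> simp_all <;> omega

lemma SimpleGraph.ConnectedComponent.mem_supp_of_mem_edgeSet {V : Type} {G : SimpleGraph V}
    (C : G.ConnectedComponent) {e : Sym2 V} (he : e ∈ G.edgeSet) {v w : V} (hv : v ∈ e)
    (hw : w ∈ e) (hvC : v ∈ C.supp) : w ∈ C.supp := by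
  obtain rfl | hvw := eq_or_ne v w
  · exact hvC
  · rw [(Sym2.mem_and_mem_iff hvw).1 ⟨hv, hw⟩] at he
    exact C.mem_supp_of_adj_mem_supp hvC he

lemma isCopy_star_iff {V : Type} [Fintype V] {G : SimpleGraph V} {ℓ : ℕ} :
    IsCopy (completeBipartiteGraph (Fin 1) (Fin ℓ)) G ↔ ∃ x, ℓ ≤ G.degree x := by
  constructor
  · rintro ⟨f, hf⟩
    refine ⟨f (.inl 0), ?_⟩
    have hleaf (j : Fin ℓ) : f (.inr j) ∈ G.neighborFinset (f (.inl 0)) :=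
      (mem_neighborFinset _ _ _).2 (hf _ _ (by simp))
    simpa using Finset.card_le_card_of_injOn (s := Finset.univ) (fun j ↦ f (.inr j))
      (fun j _ ↦ hleaf j) (fun i _ j _ hij ↦ Sum.inr_injective (f.injective hij))
  · rintro ⟨x, hx⟩
    obtain ⟨s, hs, hcard⟩ := Finset.exists_subset_card_eq hx
    let leaf : Fin ℓ ↪ V := (s.equivFinOfCardEq hcard).symm.toEmbedding.trans (.subtype _)
    have hleaf (j : Fin ℓ) : G.Adj x (leaf j) :=
      (mem_neighborFinset _ _ _).1 (hs (by simp [leaf]))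
    refine ⟨⟨Sum.elim (fun _ ↦ x) leaf, ?_⟩, ?_⟩
    · rintro (i | i) (j | j) hij
      · exact congrArg _ (Subsingleton.elim i j)
      · exact absurd hij (hleaf j).ne
      · exact absurd hij.symm (hleaf i).ne
      · exact congrArg _ (leaf.injective hij)
    · rintro (i | i) (j | j) hij <;> simp at hij
      · exact hleaf j
      · exact (hleaf i).symm

section Board

variable {V : Type}

lemma mem_edgeSet_boardOf {L : List (Sym2 V)} {e : Sym2 V} :
    e ∈ (boardOf L).edgeSet ↔ e ∈ L ∧ ¬ e.IsDiag := by
  simp [boardOf]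

lemma edgesWithin_boardOf_le_length (L : List (Sym2 V)) (S : Set V) :
    edgesWithin (boardOf L) S ≤ L.length :=
  calc edgesWithin (boardOf L) S ≤ (L.toFinset : Set (Sym2 V)).ncard :=
        Set.ncard_le_ncard (fun e he ↦ by simpa using (mem_edgeSet_boardOf.1 he.1).1)
          (Finset.finite_toSet _)
    _ ≤ L.length := by rw [Set.ncard_coe_finset]; exact L.toFinset_card_le

lemma countP_le_edgesWithin_boardOf {L : List (Sym2 V)} (hL : L.Nodup)
    (hdiag : ∀ e ∈ L, ¬ e.IsDiag) {p : Sym2 V → Prop} [DecidablePred p] {S : Set V}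
    (hS : ∀ e ∈ L, p e → ∀ v ∈ e, v ∈ S) :
    L.countP p ≤ edgesWithin (boardOf L) S := by
  have hsub : ((L.filter p).toFinset : Set (Sym2 V)) ⊆
      (boardOf L).edgeSet ∩ {e | ∀ v ∈ e, v ∈ S} := by
    intro e he
    simp only [Finset.mem_coe, List.mem_toFinset, List.mem_filter, decide_eq_true_eq] at he
    exact ⟨mem_edgeSet_boardOf.2 ⟨he.1, hdiag e he.1⟩, hS e he.1 he.2⟩
  have hfin : ((boardOf L).edgeSet ∩ {e | ∀ v ∈ e, v ∈ S}).Finite :=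
    (L.finite_toSet).subset fun e he ↦ (mem_edgeSet_boardOf.1 he.1).1
  calc L.countP p = ((L.filter p).toFinset : Set (Sym2 V)).ncard := by
        rw [Set.ncard_coe_finset, List.toFinset_card_of_nodup (hL.filter _),
          List.countP_eq_length_filter]
    _ ≤ edgesWithin (boardOf L) S := Set.ncard_le_ncard hsub hfin

lemma degree_boardOf [Fintype V] {L : List (Sym2 V)} (hL : L.Nodup)
    (hdiag : ∀ e ∈ L, ¬ e.IsDiag) (u : V) :
    (boardOf L).degree u = L.countP (u ∈ ·) := by
  have : (boardOf L).incidenceFinset u = (L.filter (u ∈ ·)).toFinset := by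
    ext e
    simp only [mem_incidenceFinset, incidenceSet, Set.mem_ofPred_eq, mem_edgeSet_boardOf,
      List.mem_toFinset, List.mem_filter, decide_eq_true_eq]
    exact ⟨fun ⟨⟨he, _⟩, hu⟩ ↦ ⟨he, hu⟩, fun ⟨he, hu⟩ ↦ ⟨⟨he, hdiag e he⟩, hu⟩⟩
  rw [← card_incidenceFinset_eq_degree, this, List.toFinset_card_of_nodup (hL.filter _),
    List.countP_eq_length_filter]

end Board

section Painting

variable {V : Type} {r : ℕ}

lemma runPainterAux_append (π : PainterStrategy V r) (h : EdgeHistory V r)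
    (l₁ l₂ : List (Sym2 V)) :
    runPainterAux π h (l₁ ++ l₂) = runPainterAux π (runPainterAux π h l₁) l₂ := by
  induction l₁ generalizing h with
  | nil => rfl
  | cons e es ih => exact ih _

lemma runPainterAux_map_fst (π : PainterStrategy V r) (h : EdgeHistory V r)
    (l : List (Sym2 V)) : (runPainterAux π h l).map Prod.fst = h.map Prod.fst ++ l := by
  induction l generalizing h with
  | nil => simp [runPainterAux]
  | cons e es ih => simp [runPainterAux, ih]

lemma runPainter_map_fst (π : PainterStrategy V r) (l : List (Sym2 V)) :
    (runPainter π l).map Prod.fst = l := by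
  simp [runPainter, runPainterAux_map_fst]

lemma runPainter_append_singleton (π : PainterStrategy V r) (l : List (Sym2 V)) (e : Sym2 V) :
    runPainter π (l ++ [e]) = runPainter π l ++ [(e, π (runPainter π l) e)] := by
  simp [runPainter, runPainterAux_append, runPainterAux]

noncomputable def colorDegree (h : EdgeHistory V r) (c : Fin r) (u : V) : ℕ :=
  h.countP fun p ↦ p.2 = c ∧ u ∈ p.1

@[simp]
lemma colorDegree_nil (c : Fin r) (u : V) : colorDegree ([] : EdgeHistory V r) c u = 0 := rfl

lemma colorDegree_append_singleton (h : EdgeHistory V r) (e : Sym2 V) (c' c : Fin r) (u : V) :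
    colorDegree (h ++ [(e, c')]) c u = colorDegree h c u + if c' = c ∧ u ∈ e then 1 else 0 := by
  simp [colorDegree]

lemma sum_colorDegree (h : EdgeHistory V r) (u : V) :
    ∑ c, colorDegree h c u = (h.map Prod.fst).countP (u ∈ ·) := by
  induction h with
  | nil => simp
  | cons p h ih =>
    simp only [colorDegree, List.countP_cons, Finset.sum_add_distrib, List.map_cons] at ih ⊢
    rw [ih]
    by_cases hu : u ∈ p.1 <;> simp [hu]

lemma colorGraph_eq_boardOf (h : EdgeHistory V r) (c : Fin r) :
    colorGraph h c = boardOf ((h.filter (·.2 = c)).map Prod.fst) := by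
  ext u v
  simp [colorGraph, boardOf]

lemma degree_colorGraph [Fintype V] {h : EdgeHistory V r} (hnd : (h.map Prod.fst).Nodup)
    (hdiag : ∀ e ∈ h.map Prod.fst, ¬ e.IsDiag) (c : Fin r) (u : V) :
    (colorGraph h c).degree u = colorDegree h c u := by
  have hsub : ((h.filter (·.2 = c)).map Prod.fst).Sublist (h.map Prod.fst) :=
    List.filter_sublist.map _
  rw [colorGraph_eq_boardOf, degree_boardOf (hsub.nodup hnd) fun e he ↦ hdiag e (hsub.subset he)]
  simp [colorDegree, List.countP_map, List.countP_filter, Bool.and_comm]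

end Painting

lemma treeSizeLE_boardOf_of_le_starGraph {V : Type} {L : List (Sym2 V)} {z : V} {k : ℕ}
    (hz : boardOf L ≤ starGraph z) (hk : L.length ≤ k) : TreeSizeLE (boardOf L) k :=
  ⟨(isAcyclic_starGraph z).anti hz, fun S _ ↦ (edgesWithin_boardOf_le_length L S).trans hk⟩

theorem builderWinsTree_star (ℓ r : ℕ) :
    BuilderWinsTree (completeBipartiteGraph (Fin 1) (Fin ℓ)) r (r * (ℓ - 1) + 1) := by
  set N := r * (ℓ - 1) + 1
  set l : List (Sym2 (Fin (N + 1))) := List.ofFn fun i : Fin N ↦ s(0, i.succ) with hl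
  have hcenter : ∀ e ∈ l, 0 ∈ e ∧ ¬ e.IsDiag := by
    simp [hl, List.mem_ofFn, eq_comm, Fin.succ_ne_zero]
  have hvalid : ValidEdgeSeq l := by
    refine ⟨List.nodup_ofFn.2 fun i j hij ↦ ?_, fun e he ↦ (hcenter e he).2⟩
    simpa [Fin.succ_ne_zero] using hij
  refine ⟨N + 1, fun π ↦ ⟨l, hvalid, fun i ↦ ?_, ?_⟩⟩
  · refine treeSizeLE_boardOf_of_le_starGraph (z := 0) (fun u v huv ↦ ?_) ?_
    · rw [boardOf, fromEdgeSet_adj] at huv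
      have hu := (hcenter _ ((List.take_sublist i l).subset huv.1)).1
      exact starGraph_adj.2 ⟨huv.2, by simpa [eq_comm] using hu⟩
    · exact (List.length_take_le' i l).trans (List.length_ofFn ..).le
  · set h := runPainter π l
    have hfst : h.map Prod.fst = l := runPainter_map_fst π l
    have hsum : ∑ c, colorDegree h c 0 = N := by
      rw [sum_colorDegree, hfst, List.countP_eq_length.2 fun e he ↦ by simpa using (hcenter e he).1]
      simp [hl, N]
    obtain ⟨c, -, hc⟩ : ∃ c ∈ Finset.univ, ℓ - 1 < colorDegree h c 0 :=
      Finset.exists_lt_of_sum_lt (by simp [hsum, N])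
    refine ⟨c, isCopy_star_iff.2 ⟨0, ?_⟩⟩
    rw [degree_colorGraph (hfst ▸ hvalid.1) (hfst ▸ hvalid.2)]
    omega

/-- The edges of `L` at `x` or `y`, together with `xy`, lie in one component of the board. -/
lemma countP_mem_add_countP_mem_lt_of_treeSizeLE {V : Type} {L : List (Sym2 V)} {x y : V} {k : ℕ}
    (hxy : x ≠ y) (hnd : (L ++ [s(x, y)]).Nodup) (hdiag : ∀ e ∈ L, ¬ e.IsDiag)
    (hT : TreeSizeLE (boardOf (L ++ [s(x, y)])) k) :
    L.countP (x ∈ ·) + L.countP (y ∈ ·) < k := by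
  set L' := L ++ [s(x, y)]
  set C := (boardOf L').connectedComponentMk x
  have hdiag' : ∀ e ∈ L', ¬ e.IsDiag := by
    simpa [L', or_imp, forall_and, hxy] using hdiag
  have hedge {e} (he : e ∈ L') : e ∈ (boardOf L').edgeSet :=
    mem_edgeSet_boardOf.2 ⟨he, hdiag' e he⟩
  have hyC : y ∈ C.supp :=
    C.mem_supp_of_mem_edgeSet (hedge (by simp [L'])) (Sym2.mem_mk_left x y)
      (Sym2.mem_mk_right x y) rfl
  have hcount : L'.countP (fun e ↦ x ∈ e ∨ y ∈ e) ≤ edgesWithin (boardOf L') C.supp := by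
    refine countP_le_edgesWithin_boardOf hnd hdiag' fun e he hxye v hv ↦ ?_
    rcases hxye with hx | hy
    · exact C.mem_supp_of_mem_edgeSet (hedge he) hx hv rfl
    · exact C.mem_supp_of_mem_edgeSet (hedge he) hy hv hyC
  have hsplit : L'.countP (fun e ↦ x ∈ e ∨ y ∈ e) = L.countP (x ∈ ·) + L.countP (y ∈ ·) + 1 := by
    have hxyL : ∀ e ∈ L, ¬ (x ∈ e ∧ y ∈ e) := fun e he hxye ↦
      (List.nodup_append.1 hnd).2.2 _ he _ (List.mem_singleton_self _)
        ((Sym2.mem_and_mem_iff hxy).1 hxye)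
    rw [List.countP_append, List.countP_or_eq_add hxyL]
    simp
  have hk := hT.2 C.supp C.connected_toSimpleGraph
  omega

lemma exists_color_forall_colorDegree_lt {V : Type} {r ℓ : ℕ} {h : EdgeHistory V r}
    {e : Sym2 V} (he : ¬ e.IsDiag) (hnd : (h.map Prod.fst ++ [e]).Nodup)
    (hdiag : ∀ e' ∈ h.map Prod.fst, ¬ e'.IsDiag)
    (hT : TreeSizeLE (boardOf (h.map Prod.fst ++ [e])) (r * (ℓ - 1))) :
    ∃ c, ∀ u ∈ e, colorDegree h c u < ℓ - 1 := by
  induction e using Sym2.ind with | h x y => ?_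
  by_contra! hbad
  have hxy : x ≠ y := by simpa using he
  have hpair (c : Fin r) : ℓ - 1 ≤ colorDegree h c x + colorDegree h c y := by
    obtain ⟨u, hu, hdeg⟩ := hbad c
    rcases Sym2.mem_iff.1 hu with rfl | rfl <;> omega
  have hsum := Finset.sum_le_sum fun c (_ : c ∈ Finset.univ) ↦ hpair c
  rw [Finset.sum_add_distrib, sum_colorDegree, sum_colorDegree] at hsum
  have := countP_mem_add_countP_mem_lt_of_treeSizeLE hxy hnd hdiag hT
  simp only [Finset.sum_const, Finset.card_univ, Fintype.card_fin, smul_eq_mul] at hsum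
  omega

/-- The fallback color `c₀` is never used against a legal Builder. -/
noncomputable def starPainter {V : Type} {r : ℕ} (ℓ : ℕ) (c₀ : Fin r) : PainterStrategy V r :=
  fun h e ↦ if hc : ∃ c, ∀ u ∈ e, colorDegree h c u < ℓ - 1 then hc.choose else c₀

lemma colorDegree_runPainter_starPainter_le {V : Type} {r ℓ : ℕ} (c₀ : Fin r)
    {l : List (Sym2 V)} (hl : ValidEdgeSeq l)
    (hT : ∀ l', l' <+: l → TreeSizeLE (boardOf l') (r * (ℓ - 1))) (c : Fin r) (u : V) :
    colorDegree (runPainter (starPainter ℓ c₀) l) c u ≤ ℓ - 1 := by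
  induction l using List.reverseRecOn with
  | nil => simp [runPainter, runPainterAux]
  | append_singleton l e ih =>
    have hl' : ValidEdgeSeq l :=
      ⟨hl.1.sublist (List.sublist_append_left _ _), fun e he ↦ hl.2 e (List.mem_append_left _ he)⟩
    rw [runPainter_append_singleton, colorDegree_append_singleton]
    set h := runPainter (starPainter ℓ c₀) l
    have hfst : h.map Prod.fst = l := runPainter_map_fst _ l
    have hgood : ∃ c, ∀ u ∈ e, colorDegree h c u < ℓ - 1 :=
      exists_color_forall_colorDegree_lt (hl.2 e (by simp)) (by rw [hfst]; exact hl.1)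
        (by rw [hfst]; exact hl'.2) (by rw [hfst]; exact hT _ List.prefix_rfl)
    have hcolor : starPainter ℓ c₀ h e = hgood.choose := dif_pos hgood
    split_ifs with hcu
    · have := hgood.choose_spec u hcu.2
      rw [← hcolor, hcu.1] at this
      omega
    · simpa using ih hl' fun l' hl'' ↦ hT l' (hl''.trans (List.prefix_append _ _))

theorem painterAvoidsTree_starPainter {ℓ r a : ℕ} (hℓ : 1 ≤ ℓ) (c₀ : Fin r) :
    PainterAvoidsTree (completeBipartiteGraph (Fin 1) (Fin ℓ)) r (r * (ℓ - 1)) a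
      (starPainter ℓ c₀) := by
  rintro l hl hT ⟨c, hcopy⟩
  obtain ⟨x, hx⟩ := isCopy_star_iff.1 hcopy
  have hfst := runPainter_map_fst (starPainter ℓ c₀) l
  rw [degree_colorGraph (by rw [hfst]; exact hl.1) (by rw [hfst]; exact hl.2)] at hx
  have := colorDegree_runPainter_starPainter_le c₀ hl
    (fun l' hl' ↦ List.prefix_iff_eq_take.1 hl' ▸ hT _) c x
  omega

/-- For the star `S_ℓ` with `ℓ` edges (`K_{1,ℓ}`) and `r ≥ 2` colors,
`k*(S_ℓ,r) = r(ℓ-1)+1`: Builder wins the deterministic `S_ℓ`-avoidance game with `r` colors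
and tree size restriction `r(ℓ-1)+1`, and Painter wins it with tree size restriction
`r(ℓ-1)`. -/
theorem statement7 (ℓ r : ℕ) (hℓ : 1 ≤ ℓ) (hr : 2 ≤ r) :
    BuilderWinsTree (completeBipartiteGraph (Fin 1) (Fin ℓ)) r (r * (ℓ - 1) + 1) ∧
    PainterWinsTree (completeBipartiteGraph (Fin 1) (Fin ℓ)) r (r * (ℓ - 1)) :=
  ⟨builderWinsTree_star ℓ r, fun _ ↦ ⟨_, painterAvoidsTree_starPainter hℓ ⟨0, by omega⟩⟩⟩
end

section
/- Fix an integer k ≥ 1. For every function N : ℕ → ℕ with N(n) = o(n^{1−1/k}), the probability that the uniformly random graph on n vertices with exactly N(n) edges has the property that every connected component is a tree with at most k−1 edges (equivalently, the graph contains no cycle and no subgraph that is a tree with k edges) tends to 1 as n → ∞. -/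
open SimpleGraph Filter Asymptotics
open scoped Classical

/-- The probability of the event `P` for the uniformly random graph on `n` vertices with
exactly `N` edges (a uniformly random set of `N` non-loop vertex pairs). -/
noncomputable def graphProb (n N : ℕ) (P : SimpleGraph (Fin n) → Prop) : ℝ :=
  (Set.ncard {E : Finset (Sym2 (Fin n)) |
      (E.card = N ∧ ∀ e ∈ E, ¬ e.IsDiag) ∧ P (SimpleGraph.fromEdgeSet ↑E)} : ℝ) /
  (Set.ncard {E : Finset (Sym2 (Fin n)) | E.card = N ∧ ∀ e ∈ E, ¬ e.IsDiag} : ℝ)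

/-!
A graph violates the condition exactly when it contains a cycle or a connected subgraph with at
least `k` edges. In the first case it has `m ≤ k` edges spanned by `m` vertices (a short cycle),
otherwise it has `k` edges spanned by `k + 1` vertices (grow a connected edge set one edge at a
time). There are `O(n^s)` sets of `m` edges spanned by `s` vertices, and each lies in `G(n, N)` with
probability `C(N, m) / C(C(n, 2), m) = O((N / n²)^m)`. By the union bound the failure probability is
`O(∑_{m ≤ k} (N / n)^m + N^k / n^(k-1))`, which tends to `0` when `N = o(n^(1 - 1/k))`.
-/

namespace Finset

variable {α ι : Type*} {A : Finset α} {N m : ℕ}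

noncomputable def uniformProb (A : Finset α) (N : ℕ) (Q : Finset α → Prop) [DecidablePred Q] :
    ℝ :=
  #{E ∈ A.powersetCard N | Q E} / #(A.powersetCard N)

lemma uniformProb_le_one (Q : Finset α → Prop) [DecidablePred Q] : uniformProb A N Q ≤ 1 :=
  div_le_one_of_le₀ (by exact_mod_cast card_filter_le _ _) (by positivity)

lemma uniformProb_mono {Q Q' : Finset α → Prop} [DecidablePred Q] [DecidablePred Q']
    (h : ∀ E, Q E → Q' E) : uniformProb A N Q ≤ uniformProb A N Q' := by
  unfold uniformProb
  gcongr with E _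
  exact h E

lemma one_sub_uniformProb_not (hN : N ≤ #A) (Q : Finset α → Prop) [DecidablePred Q] :
    1 - uniformProb A N (fun E => ¬ Q E) = uniformProb A N Q := by
  have hpos : (0 : ℝ) < #(A.powersetCard N) := by
    rw [card_powersetCard]; exact_mod_cast Nat.choose_pos hN
  rw [uniformProb, uniformProb, sub_eq_iff_eq_add, ← add_div, eq_comm, div_eq_one_iff_eq hpos.ne']
  exact_mod_cast card_filter_add_card_filter_not Q

lemma uniformProb_or_le (Q Q' : Finset α → Prop) [DecidablePred Q] [DecidablePred Q'] :
    uniformProb A N (fun E => Q E ∨ Q' E) ≤ uniformProb A N Q + uniformProb A N Q' := by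
  rw [uniformProb, uniformProb, uniformProb, ← add_div, filter_or]
  gcongr
  exact_mod_cast card_union_le _ _

lemma uniformProb_exists_le (I : Finset ι) (Q : ι → Finset α → Prop)
    [∀ i, DecidablePred (Q i)] :
    uniformProb A N (fun E => ∃ i ∈ I, Q i E) ≤ ∑ i ∈ I, uniformProb A N (Q i) := by
  induction I using Finset.induction_on with
  | empty => simp [uniformProb]
  | insert i I hi ih =>
    rw [sum_insert hi]
    refine le_trans (uniformProb_mono fun E hE => ?_)
      ((uniformProb_or_le (Q i) fun E => ∃ j ∈ I, Q j E).trans ((add_le_add_iff_left _).2 ih))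
    simpa only [mem_insert, exists_eq_or_imp] using hE

lemma uniformProb_superset_le [DecidableEq α] (F : Finset α) :
    uniformProb A N (F ⊆ ·) ≤ (N.choose #F : ℝ) / (#A).choose #F := by
  by_cases h : F ⊆ A ∧ #F ≤ N ∧ N ≤ #A
  · obtain ⟨hFA, hFN, hNA⟩ := h
    have hpos : (0 : ℝ) < (#A).choose #F := by
      exact_mod_cast Nat.choose_pos (hFN.trans hNA)
    rw [uniformProb, card_filter_powersetCard_subset F A N hFA hFN, card_powersetCard,
      div_le_div_iff₀ (by exact_mod_cast Nat.choose_pos hNA) hpos]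
    have key : (#A - #F).choose (N - #F) * (#A).choose #F = N.choose #F * (#A).choose N := by
      rw [mul_comm, ← Nat.choose_mul hFN, mul_comm]
    exact_mod_cast key.le
  · have : {E ∈ A.powersetCard N | F ⊆ E} = ∅ := by
      refine filter_false_of_mem fun E hE hFE => h ?_
      rw [mem_powersetCard] at hE
      exact ⟨hFE.trans hE.1, hE.2 ▸ card_le_card hFE, hE.2 ▸ card_le_card hE.1⟩
    rw [uniformProb, this, card_empty, Nat.cast_zero, zero_div]
    positivity

lemma uniformProb_exists_superset_le [DecidableEq α] {W : Finset (Finset α)}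
    (hW : ∀ F ∈ W, #F = m) :
    uniformProb A N (fun E => ∃ F ∈ W, F ⊆ E) ≤ #W * ((N.choose m : ℝ) / (#A).choose m) := by
  refine (uniformProb_exists_le W (fun F E => F ⊆ E)).trans ?_
  rw [← nsmul_eq_mul]
  exact sum_le_card_nsmul _ _ _ fun F hF => hW F hF ▸ uniformProb_superset_le F

end Finset

namespace SimpleGraph

open Finset

variable {V : Type*} {G : SimpleGraph V}

def HasEdgesOnVertices (G : SimpleGraph V) (m s : ℕ) : Prop :=
  ∃ F : Finset (Sym2 V), ∃ S : Finset V,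
    (F : Set (Sym2 V)) ⊆ G.edgeSet ∧ #F = m ∧ #S ≤ s ∧ F ⊆ S.sym2

lemma Walk.IsCycle.hasEdgesOnVertices [DecidableEq V] {u : V} {p : G.Walk u u}
    (hp : p.IsCycle) : G.HasEdgesOnVertices p.length p.length := by
  refine ⟨p.edges.toFinset, p.support.tail.toFinset, fun e he => ?_, ?_, ?_, fun e he => ?_⟩
  · exact p.edges_subset_edgeSet (List.mem_toFinset.1 he)
  · rw [List.toFinset_card_of_nodup hp.edges_nodup, p.length_edges]
  · rw [List.toFinset_card_of_nodup hp.support_nodup, List.length_tail, p.length_support]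
    simp
  · refine mem_sym2_iff.2 fun v hv => List.mem_toFinset.2 ?_
    rcases p.mem_support_iff.1 (p.mem_support_of_mem_edges (List.mem_toFinset.1 he) hv)
      with rfl | h
    · exact p.end_mem_tail_support hp.not_nil
    · exact h

lemma Subgraph.Connected.exists_adj_notMem {H : G.Subgraph} (hH : H.Connected)
    {F : Finset (Sym2 V)} {S : Finset V} (hFS : F ⊆ S.sym2) {u : V} (hu : u ∈ S)
    (huH : u ∈ H.verts) (hF : #F < H.edgeSet.ncard) :
    ∃ a b, H.Adj a b ∧ s(a, b) ∉ F ∧ b ∈ S := by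
  obtain ⟨e, heH, heF⟩ : ∃ e ∈ H.edgeSet, e ∉ F := by
    by_contra! h
    exact hF.not_ge (by simpa using Set.ncard_le_ncard h F.finite_toSet)
  induction e using Sym2.ind with
  | _ x y =>
  have hxy : H.Adj x y := heH
  by_cases hx : x ∈ S
  · exact ⟨y, x, hxy.symm, by rwa [Sym2.eq_swap], hx⟩
  · obtain ⟨d, -, hd₁, hd₂⟩ := (hH.preconnected ⟨x, H.edge_vert hxy⟩ ⟨u, huH⟩).some
      |>.exists_boundary_dart {w | (w : V) ∉ S} hx (by simpa using hu)
    refine ⟨d.fst, d.snd, d.adj, fun h => hd₁ ?_, by simpa using hd₂⟩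
    exact mem_sym2_iff.1 (hFS h) _ (Sym2.mem_mk_left _ _)

lemma Subgraph.Connected.hasEdgesOnVertices [DecidableEq V] {H : G.Subgraph} (hH : H.Connected)
    {k : ℕ} (hk : k ≤ H.edgeSet.ncard) : G.HasEdgesOnVertices k (k + 1) := by
  suffices ∃ F : Finset (Sym2 V), ∃ S : Finset V, (F : Set (Sym2 V)) ⊆ H.edgeSet ∧ #F = k ∧
      #S ≤ k + 1 ∧ F ⊆ S.sym2 ∧ ∃ u ∈ S, u ∈ H.verts by
    obtain ⟨F, S, hFH, hF, hS, hFS, -⟩ := this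
    exact ⟨F, S, hFH.trans H.edgeSet_subset, hF, hS, hFS⟩
  induction k with
  | zero =>
    obtain ⟨v, hv⟩ := hH.nonempty
    exact ⟨∅, {v}, by simp, rfl, by simp, by simp, v, by simp, hv⟩
  | succ k ih =>
    obtain ⟨F, S, hFH, rfl, hS, hFS, u, hu, huH⟩ := ih (by omega)
    obtain ⟨a, b, hab, habF, hb⟩ := hH.exists_adj_notMem hFS hu huH (by omega)
    refine ⟨insert s(a, b) F, insert a S, ?_, card_insert_of_notMem habF, ?_, ?_,
      u, mem_insert_of_mem hu, huH⟩
    · rw [coe_insert]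
      exact Set.insert_subset hab hFH
    · exact (card_insert_le _ _).trans (by omega)
    · refine insert_subset ?_ (hFS.trans (sym2_mono (subset_insert _ _)))
      exact mk_mem_sym2_iff.2 ⟨mem_insert_self _ _, mem_insert_of_mem hb⟩

lemma edgeSet_induce_top (S : Set V) :
    ((⊤ : G.Subgraph).induce S).edgeSet = G.edgeSet ∩ {e | ∀ v ∈ e, v ∈ S} := by
  ext e
  induction e using Sym2.ind with
  | _ a b =>
    simp only [Subgraph.mem_edgeSet, Subgraph.induce_adj, Subgraph.top_adj, Set.mem_inter_iff,
      mem_edgeSet, Set.mem_ofPred_eq, Sym2.mem_iff, forall_eq_or_imp, forall_eq]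
    tauto

lemma hasEdgesOnVertices_of_not_treeSizeLE {V : Type} {G : SimpleGraph V} [DecidableEq V]
    {k : ℕ} (h : ¬ TreeSizeLE G (k - 1)) :
    (∃ m ∈ Icc 1 k, G.HasEdgesOnVertices m m) ∨ G.HasEdgesOnVertices k (k + 1) := by
  rw [TreeSizeLE, not_and_or] at h
  rcases h with hcyc | hS
  · obtain ⟨v, p, hp⟩ : ∃ v, ∃ p : G.Walk v v, p.IsCycle := by simpa [IsAcyclic] using hcyc
    by_cases hlen : p.length ≤ k
    · have := hp.three_le_length
      exact Or.inl ⟨p.length, mem_Icc.2 ⟨by omega, hlen⟩, hp.hasEdgesOnVertices⟩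
    · refine Or.inr (p.toSubgraph_connected.hasEdgesOnVertices ?_)
      rw [p.edgeSet_toSubgraph, ← p.coe_edges_toFinset, Set.ncard_coe_finset,
        List.toFinset_card_of_nodup hp.edges_nodup, p.length_edges]
      omega
  · push Not at hS
    obtain ⟨S, hconn, hcount⟩ := hS
    refine Or.inr ((connected_induce_iff.1 hconn).hasEdgesOnVertices ?_)
    rw [edgeSet_induce_top]
    exact Nat.le_of_pred_lt hcount

section Fintype

variable [Fintype V] [DecidableEq V] {m s : ℕ}

variable (V) in
def edgeSetsOn (m s : ℕ) : Finset (Finset (Sym2 V)) :=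
  (univ.powersetCard s).biUnion fun S => S.sym2.powersetCard m

lemma card_edgeSetsOn_le (m s : ℕ) :
    #(edgeSetsOn V m s) ≤ (Fintype.card V).choose s * ((s + 1).choose 2).choose m := by
  calc #(edgeSetsOn V m s)
      ≤ ∑ S ∈ univ.powersetCard s, #(S.sym2.powersetCard m) := card_biUnion_le
    _ = (Fintype.card V).choose s * ((s + 1).choose 2).choose m := by
      rw [sum_congr rfl fun S hS => by rw [card_powersetCard, card_sym2, (mem_powersetCard.1 hS).2],
        sum_const, card_powersetCard, card_univ, smul_eq_mul]

lemma HasEdgesOnVertices.exists_mem_edgeSetsOn (h : G.HasEdgesOnVertices m s)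
    (hs : s ≤ Fintype.card V) : ∃ F ∈ edgeSetsOn V m s, (F : Set (Sym2 V)) ⊆ G.edgeSet := by
  obtain ⟨F, S, hFG, hF, hS, hFS⟩ := h
  obtain ⟨T, hST, hT⟩ := exists_superset_card_eq hS hs
  exact ⟨F, mem_biUnion.2 ⟨T, mem_powersetCard.2 ⟨subset_univ _, hT⟩,
    mem_powersetCard.2 ⟨hFS.trans (sym2_mono hST), hF⟩⟩, hFG⟩

/-- Bounds the expected number of `m`-edge sets of `G(n, N)` spanned by `s` vertices: the number
of such edge sets times the probability that a fixed one is present. -/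
noncomputable def firstMomentBound (n N m s : ℕ) : ℝ :=
  n.choose s * ((s + 1).choose 2).choose m * ((N.choose m : ℝ) / (n.choose 2).choose m)

lemma uniformProb_hasEdgesOnVertices_le (N : ℕ) (hs : s ≤ Fintype.card V) :
    (⊤ : SimpleGraph V).edgeFinset.uniformProb N
        (fun E => (fromEdgeSet (E : Set (Sym2 V))).HasEdgesOnVertices m s) ≤
      firstMomentBound (Fintype.card V) N m s := by
  refine (uniformProb_mono fun E h => ?_).trans
    ((uniformProb_exists_superset_le (W := edgeSetsOn V m s) (m := m) fun F hF => ?_).trans ?_)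
  · obtain ⟨F, hF, hFE⟩ := h.exists_mem_edgeSetsOn hs
    exact ⟨F, hF, coe_subset.1 (hFE.trans (edgeSet_fromEdgeSet _ ▸ Set.sdiff_subset))⟩
  · obtain ⟨S, -, hFS⟩ := mem_biUnion.1 hF
    exact (mem_powersetCard.1 hFS).2
  · rw [card_edgeFinset_top_eq_card_choose_two, firstMomentBound]
    gcongr
    exact_mod_cast card_edgeSetsOn_le m s

end Fintype

end SimpleGraph

open Finset

lemma graphProb_eq_uniformProb (n N : ℕ) (P : SimpleGraph (Fin n) → Prop) :
    graphProb n N P =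
      (⊤ : SimpleGraph (Fin n)).edgeFinset.uniformProb N (fun E => P (fromEdgeSet ↑E)) := by
  have hmem : ∀ E : Finset (Sym2 (Fin n)),
      E ∈ (⊤ : SimpleGraph (Fin n)).edgeFinset.powersetCard N ↔
        #E = N ∧ ∀ e ∈ E, ¬ e.IsDiag := fun E => by
    rw [mem_powersetCard, and_comm]
    simp [subset_iff]
  rw [graphProb, uniformProb, ← Set.ncard_coe_finset, ← Set.ncard_coe_finset]
  congr 3 <;> ext E <;> simp only [Set.mem_ofPred_eq, coe_filter, mem_coe, hmem]

lemma one_sub_le_graphProb_treeSizeLE {n N k : ℕ} (hkn : k + 1 ≤ n) (hN : N ≤ n.choose 2) :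
    1 - (∑ m ∈ Icc 1 k, firstMomentBound n N m m + firstMomentBound n N k (k + 1)) ≤
      graphProb n N (fun G => TreeSizeLE G (k - 1)) := by
  have hNA : N ≤ #(⊤ : SimpleGraph (Fin n)).edgeFinset := by
    rwa [card_edgeFinset_top_eq_card_choose_two, Fintype.card_fin]
  rw [graphProb_eq_uniformProb, ← one_sub_uniformProb_not hNA]
  gcongr
  refine (uniformProb_mono fun E hE => hasEdgesOnVertices_of_not_treeSizeLE hE).trans
    ((uniformProb_or_le _ _).trans (add_le_add
      ((uniformProb_exists_le _ _).trans (sum_le_sum fun m hm => ?_)) ?_))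
  · simpa using uniformProb_hasEdgesOnVertices_le (V := Fin n) (m := m) (s := m) N
      (by rw [Fintype.card_fin]; have := (mem_Icc.1 hm).2; omega)
  · simpa using uniformProb_hasEdgesOnVertices_le (V := Fin n) (m := k) (s := k + 1) N
      (by simpa using hkn)

lemma choose_mul_choose_div_choose_le {n N m s : ℕ} (hm : 0 < m) (hn : 2 * m ≤ n)
    (hs : s ≤ 2 * m) :
    (n.choose s : ℝ) * ((N.choose m : ℝ) / (n.choose 2).choose m) ≤
      4 ^ m * ((N : ℝ) ^ m / (n : ℝ) ^ (2 * m - s)) := by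
  have hn0 : (0 : ℝ) < n := by exact_mod_cast (by omega : 0 < n)
  have hmM : m ≤ n.choose 2 + 1 := by
    have : (m : ℝ) ≤ n.choose 2 + 1 := by
      rw [Nat.cast_choose_two]
      have : (2 * m : ℝ) ≤ n := by exact_mod_cast hn
      have : (2 : ℝ) ≤ n := by exact_mod_cast (by omega : 2 ≤ n)
      nlinarith
    exact_mod_cast this
  have hsq : (n : ℝ) ^ 2 / 4 ≤ ((n.choose 2 + 1 - m : ℕ) : ℝ) := by
    rw [Nat.cast_sub hmM, Nat.cast_add, Nat.cast_choose_two, Nat.cast_one]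
    have : (2 * m : ℝ) ≤ n := by exact_mod_cast hn
    have : (1 : ℝ) ≤ m := by exact_mod_cast hm
    nlinarith
  have hlow : ((n : ℝ) ^ 2 / 4) ^ m / m.factorial ≤ (n.choose 2).choose m :=
    le_trans (by gcongr) (Nat.pow_le_choose m (n.choose 2))
  have hpow : (n : ℝ) ^ s * (n : ℝ) ^ (2 * m - s) = ((n : ℝ) ^ 2) ^ m := by
    rw [← pow_add, ← pow_mul, Nat.add_sub_cancel' hs]
  calc (n.choose s : ℝ) * ((N.choose m : ℝ) / (n.choose 2).choose m)
      ≤ (n : ℝ) ^ s * (((N : ℝ) ^ m / m.factorial) / (((n : ℝ) ^ 2 / 4) ^ m / m.factorial)) := by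
        gcongr
        · exact_mod_cast Nat.choose_le_pow n s
        · exact Nat.choose_le_pow_div m N
    _ = 4 ^ m * ((N : ℝ) ^ m / (n : ℝ) ^ (2 * m - s)) := by
        rw [div_pow, ← hpow]
        field_simp

lemma tendsto_firstMomentBound {m s : ℕ} (hm : 0 < m) (hs : s ≤ 2 * m) {N : ℕ → ℕ}
    (hN : (fun n => (N n : ℝ) ^ m) =o[atTop] fun n => (n : ℝ) ^ (2 * m - s)) :
    Tendsto (fun n => firstMomentBound n (N n) m s) atTop (nhds 0) := by
  have h := hN.tendsto_div_nhds_zero.const_mul ((((s + 1).choose 2).choose m : ℝ) * 4 ^ m)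
  rw [mul_zero] at h
  refine squeeze_zero' (Eventually.of_forall fun n => by unfold firstMomentBound; positivity) ?_ h
  filter_upwards [eventually_ge_atTop (2 * m)] with n hn
  calc firstMomentBound n (N n) m s
      = (((s + 1).choose 2).choose m : ℝ) *
          ((n.choose s : ℝ) * (((N n).choose m : ℝ) / (n.choose 2).choose m)) := by
        rw [firstMomentBound]; ring
    _ ≤ (((s + 1).choose 2).choose m : ℝ) * (4 ^ m * ((N n : ℝ) ^ m / (n : ℝ) ^ (2 * m - s))) := by
        exact mul_le_mul_of_nonneg_left (choose_mul_choose_div_choose_le hm hn hs) (by positivity)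
    _ = _ := by ring

/-- Fix `k ≥ 1`. If `N(n) = o(n^(1-1/k))`, then a.a.s. every connected
component of the uniformly random graph on `n` vertices with `N(n)` edges is a tree with at
most `k-1` edges (equivalently, the graph contains no cycle and no connected subgraph with
`k` or more edges). -/
theorem statement16 (k : ℕ) (hk : 1 ≤ k) (N : ℕ → ℕ)
    (hN : (fun n : ℕ => (N n : ℝ)) =o[atTop]
      (fun n : ℕ => (n : ℝ) ^ ((1 : ℝ) - 1 / (k : ℝ)))) :
    Tendsto (fun n : ℕ => graphProb n (N n) (fun G => TreeSizeLE G (k - 1)))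
      atTop (nhds 1) := by
  have hlin : (fun n : ℕ => (N n : ℝ)) =o[atTop] fun n : ℕ => (n : ℝ) := by
    refine hN.trans_isBigO (IsBigO.of_bound 1 ?_)
    filter_upwards [eventually_ge_atTop 1] with n hn
    rw [one_mul, Real.norm_of_nonneg (by positivity), Real.norm_natCast]
    exact Real.rpow_le_self_of_one_le (by exact_mod_cast hn) (by simp)
  have hcrit : (fun n : ℕ => (N n : ℝ) ^ k) =o[atTop] fun n : ℕ => (n : ℝ) ^ (2 * k - (k + 1)) := by
    refine (hN.pow hk).congr_right fun n => ?_
    rw [← Real.rpow_mul_natCast (by positivity), ← Real.rpow_natCast]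
    congr 1
    rw [show 2 * k - (k + 1) = k - 1 by omega, Nat.cast_sub hk, Nat.cast_one]
    field_simp
  have hsmall : ∀ᶠ n in atTop, k + 1 ≤ n ∧ N n ≤ n.choose 2 := by
    filter_upwards [hlin.bound one_pos, eventually_ge_atTop (k + 3)] with n hNn hn
    refine ⟨by omega, le_trans (b := n) (by simpa using hNn) ?_⟩
    rw [Nat.choose_two_right, Nat.le_div_iff_mul_le two_pos]
    exact Nat.mul_le_mul_left n (by omega)
  have hbound : Tendsto (fun n => ∑ m ∈ Icc 1 k, firstMomentBound n (N n) m m +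
      firstMomentBound n (N n) k (k + 1)) atTop (nhds 0) := by
    have hcycle : ∀ m ∈ Icc 1 k, Tendsto (fun n => firstMomentBound n (N n) m m) atTop (nhds 0) :=
      fun m hm => tendsto_firstMomentBound (mem_Icc.1 hm).1 (by omega)
        ((hlin.pow (mem_Icc.1 hm).1).congr_right fun n => by rw [two_mul, Nat.add_sub_cancel])
    simpa using (tendsto_finsetSum _ hcycle).add (tendsto_firstMomentBound hk (by omega) hcrit)
  refine tendsto_of_tendsto_of_tendsto_of_le_of_le' (by simpa using tendsto_const_nhds.sub hbound)
    tendsto_const_nhds ?_ (Eventually.of_forall fun n => ?_)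
  · filter_upwards [hsmall] with n hn using one_sub_le_graphProb_treeSizeLE hn.1 hn.2
  · rw [graphProb_eq_uniformProb]
    exact uniformProb_le_one _
end
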